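/- Let N ⊴ G with G/N a p-group, and let e be a G-stable central idempotent of kN, where k has characteristic p. Then e is a central idempotent of kG, and there is a unique block idempotent of kG with e as a summand; i.e., a unique block of kG covers the G-stable block of kN corresponding to e. -/

import Mathlib

/-- A block idempotent of a ring `R`: a nonzero central idempotent that is primitive among
central idempotents. -/
def IsBlockIdempotent {R : Type} [Ring R] (e : R) : Prop :=
  e ≠ 0 ∧ IsIdempotentElem e ∧ e ∈ Set.center R ∧
    ∀ f g : R, IsIdempotentElem f → IsIdempotentElem g → f ∈ Set.center R →
      g ∈ Set.center R → f * g = 0 → f + g = e → f = 0 ∨ g = 0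

/-!
Write `Q = G ⧸ N` and grade `k[G]` by `Q` through the coaction `δ : g ↦ ḡ ⊗ g`,
`k[G] → k[G][Q]`. For a central idempotent `f` of `k[G]`, both `δ f` and `1 ⊗ f` are idempotents
with augmentation `f`, and `1 ⊗ f` is central, so `(1 - δ f) (1 ⊗ f)` is an idempotent in the
augmentation ideal. Since `Q` is a `p`-group in characteristic `p` that ideal is nil (induct on
`|Q|`, dividing out a central `w`, for which `w - 1` is central and nilpotent), hence
`δ f · (1 ⊗ f) = 1 ⊗ f`. In degree `1` this says `f_N f = f` for the `N`-part `f_N` of `f`, and the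
same for `1 - f` gives `f_N = f`. So every central idempotent of `k[G]` lies in `k[N]`: the
primitivity of `e` among central idempotents passes from `k[N]` to `k[G]`, and a block `f` of
`k[G]` with `f e ≠ 0` must be `e` itself.
-/

open MonoidAlgebra

namespace IsBlockIdempotent

variable {R S : Type} [Ring R] [Ring S]

theorem eq_of_mul_ne_zero {f e : R} (hf : IsBlockIdempotent f) (he : IsBlockIdempotent e)
    (hfe : f * e ≠ 0) : f = e := by
  obtain ⟨hf0, hfi, hfc, hfprim⟩ := hf
  obtain ⟨-, hei, hec, heprim⟩ := he
  have hcomm : Commute f e := Semigroup.mem_center_iff.mp hec f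
  have hec' : 1 - e ∈ Set.center R := (Subring.center R).sub_mem (Subring.center R).one_mem hec
  have hfe_eq : f * e = f := by
    have hsplit : f * e + f * (1 - e) = f := by rw [← mul_add, add_sub_cancel, mul_one]
    have horth : f * e * (f * (1 - e)) = 0 := by
      rw [mul_assoc, hcomm.symm.left_comm, hei.mul_one_sub_self, mul_zero, mul_zero]
    rcases hfprim _ _ (hfi.mul_of_commute hcomm hei)
      (hfi.mul_of_commute ((Commute.one_right f).sub_right hcomm) hei.one_sub)
      (Set.mul_mem_center hfc hec) (Set.mul_mem_center hfc hec') horth hsplit with h | h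
    · exact absurd h hfe
    · rwa [h, add_zero] at hsplit
  have horth : f * (e - f) = 0 := by rw [mul_sub, hfe_eq, hfi.eq, sub_self]
  rcases heprim f (e - f) hfi (hfi.sub hei hfe_eq (hcomm.eq ▸ hfe_eq)) hfc
    ((Subring.center R).sub_mem hec hfc) horth (add_sub_cancel f e) with h | h
  · exact absurd h hf0
  · exact (sub_eq_zero.mp h).symm

theorem map {φ : R →+* S} (hφ : Function.Injective φ)
    (hrange : ∀ f : S, IsIdempotentElem f → f ∈ Set.center S → f ∈ Set.range φ) {e : R}
    (he : IsBlockIdempotent e) (hc : φ e ∈ Set.center S) : IsBlockIdempotent (φ e) := by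
  obtain ⟨he0, hei, -, heprim⟩ := he
  have hcenter {a : R} (ha : φ a ∈ Set.center S) : a ∈ Set.center R :=
    Semigroup.mem_center_iff.mpr fun r => hφ <| by
      simp only [map_mul, Semigroup.mem_center_iff.mp ha]
  have hidem {a : R} (ha : IsIdempotentElem (φ a)) : IsIdempotentElem a :=
    hφ (by rw [map_mul, ha.eq])
  refine ⟨(map_ne_zero_iff φ hφ).mpr he0, hei.map φ, hc, ?_⟩
  rintro f g hfi hgi hfc hgc hfg hsum
  obtain ⟨a, rfl⟩ := hrange f hfi hfc
  obtain ⟨b, rfl⟩ := hrange g hgi hgc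
  rcases heprim a b (hidem hfi) (hidem hgi) (hcenter hfc) (hcenter hgc)
    (hφ (by rw [map_mul, hfg, map_zero])) (hφ (by rw [map_add, hsum])) with h | h
  · exact .inl (by rw [h, map_zero])
  · exact .inr (by rw [h, map_zero])

end IsBlockIdempotent

theorem Subgroup.normal_zpowers_of_mem_center {Q : Type*} [Group Q] {w : Q}
    (hw : w ∈ Subgroup.center Q) : (Subgroup.zpowers w).Normal where
  conj_mem n hn g := by
    rwa [Subgroup.mem_center_iff.mp (Subgroup.zpowers_le.mpr hw hn), mul_inv_cancel_right]

namespace MonoidAlgebra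

instance charP {R Q : Type*} [Semiring R] [Monoid Q] (p : ℕ) [CharP R p] : CharP R[Q] p :=
  charP_of_injective_ringHom (f := singleOneRingHom) single_right_injective p

theorem mem_center_of_forall_single_mul_mul_single_inv {k G : Type*} [CommSemiring k] [Group G]
    {x : k[G]} (hx : ∀ g : G, single g (1 : k) * x * single g⁻¹ 1 = x) :
    x ∈ Set.center k[G] := by
  refine Semigroup.mem_center_iff.mpr fun a => ?_
  induction a using MonoidAlgebra.induction_linear with
  | zero => rw [zero_mul, mul_zero]
  | add a b ha hb => rw [add_mul, mul_add, ha, hb]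
  | single g c =>
    have hg : single g (1 : k) * x = x * single g 1 := by
      conv_rhs => rw [← hx g, mul_assoc _ (single g⁻¹ 1), single_mul_single, inv_mul_cancel,
        mul_one, ← one_def, mul_one]
    rw [← mul_one c, ← smul_single', smul_mul_assoc, hg, mul_smul_comm]

section Augmentation

variable (R Q : Type*) [Semiring R] [Monoid Q]

noncomputable def augmentation : R[Q] →+* R :=
  liftNCRingHom (RingHom.id R) 1 fun _ _ => Commute.one_right _

variable {R Q}

@[simp]
theorem augmentation_single (q : Q) (r : R) : augmentation R Q (single q r) = r := by
  simp [augmentation, liftNCRingHom_single]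

theorem augmentation_comp_mapDomainRingHom {Q' : Type*} [Monoid Q'] (f : Q →* Q') :
    (augmentation R Q').comp (mapDomainRingHom R f) = augmentation R Q :=
  ringHom_ext (fun r => by simp) fun q => by simp

theorem augmentation_injective [Subsingleton Q] : Function.Injective (augmentation R Q) := by
  have : augmentation R Q = (uniqueRingEquiv Q).toRingHom :=
    ringHom_ext (fun r => by simp) fun q => by simp [Subsingleton.elim q 1]
  rw [this]
  exact (uniqueRingEquiv Q).injective

end Augmentation

section AugmentationIdeal

variable {R Q : Type*} [Ring R] [Group Q]

theorem isNilpotent_single_sub_one {p : ℕ} [Fact p.Prime] [CharP R p] {w : Q}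
    (hw : ∃ a : ℕ, w ^ p ^ a = 1) : IsNilpotent (single w (1 : R) - 1) := by
  obtain ⟨a, ha⟩ := hw
  refine ⟨p ^ a, ?_⟩
  rw [sub_pow_char_pow_of_commute p a (Commute.one_right _), single_pow, ha, one_pow, one_pow,
    ← one_def, sub_self]

theorem commute_single_sub_one {w : Q} (hw : w ∈ Subgroup.center Q) (y : R[Q]) :
    Commute (single w (1 : R) - 1) y :=
  (single_commute (fun q => (Subgroup.mem_center_iff.mp hw q).symm) Commute.one_left y).sub_left
    (Commute.one_left y)

theorem sub_one_dvd_of_mapDomain_eq_zero [Finite Q] {w : Q} (hw : w ∈ Subgroup.center Q)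
    {x : R[Q]} (hx : mapDomain (QuotientGroup.mk : Q → Q ⧸ Subgroup.zpowers w) x = 0) :
    single w (1 : R) - 1 ∣ x := by
  set ρ : R[Q ⧸ Subgroup.zpowers w] → R[Q] := mapDomain Quotient.out
  suffices ∀ y : R[Q], single w (1 : R) - 1 ∣ y - ρ (mapDomain QuotientGroup.mk y) by
    simpa [hx, ρ, mapDomain_zero] using this x
  intro y
  induction y using MonoidAlgebra.induction_linear with
  | zero => simp [ρ, mapDomain_zero]
  | add y z hy hz =>
    convert dvd_add hy hz using 1
    simp only [ρ, mapDomain_add]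
    abel
  | single q r =>
    obtain ⟨⟨_, hn⟩, hout⟩ := QuotientGroup.mk_out_eq_mul (Subgroup.zpowers w) q
    obtain ⟨m, rfl⟩ := mem_powers_iff_mem_zpowers.mpr hn
    obtain ⟨c, hc⟩ := sub_one_dvd_pow_sub_one (single w (1 : R)) m
    refine ⟨-(single q r * c), ?_⟩
    simp only [ρ, mapDomain_single, hout]
    rw [mul_neg, (commute_single_sub_one hw _).left_comm, ← hc, mul_sub, single_pow,
      single_mul_single, one_pow, mul_one, mul_one]
    abel

theorem isNilpotent_of_augmentation_eq_zero {p : ℕ} [Fact p.Prime] [CharP R p] [Finite Q]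
    (hQ : IsPGroup p Q) {x : R[Q]} (hx : augmentation R Q x = 0) : IsNilpotent x := by
  induction hn : Nat.card Q using Nat.strong_induction_on generalizing Q with
  | _ n ih =>
  rcases subsingleton_or_nontrivial Q with hQ1 | hQ1
  · rw [augmentation_injective (hx.trans (map_zero _).symm)]
    exact IsNilpotent.zero
  have := hQ.center_nontrivial
  obtain ⟨⟨w, hwc⟩, hw1⟩ := exists_ne (1 : Subgroup.center Q)
  replace hw1 : w ≠ 1 := fun h => hw1 (Subtype.ext h)
  set K := Subgroup.zpowers w
  have : K.Normal := Subgroup.normal_zpowers_of_mem_center hwc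
  have hcard : Nat.card (Q ⧸ K) < n := by
    rw [← hn, K.card_eq_card_quotient_mul_card_subgroup]
    exact lt_mul_of_one_lt_right Nat.card_pos
      ((Subgroup.one_lt_card_iff_ne_bot K).mpr (Subgroup.zpowers_eq_bot.not.mpr hw1))
  obtain ⟨m, hm⟩ := ih _ hcard (hQ.to_quotient K) (x := mapDomainRingHom R (QuotientGroup.mk' K) x)
    (by rw [← RingHom.comp_apply, augmentation_comp_mapDomainRingHom, hx]) rfl
  rw [← map_pow] at hm
  obtain ⟨c, hc⟩ := sub_one_dvd_of_mapDomain_eq_zero hwc hm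
  refine IsNilpotent.of_pow (m := m) ?_
  rw [hc]
  exact (commute_single_sub_one hwc c).isNilpotent_mul_right (isNilpotent_single_sub_one (hQ w))

end AugmentationIdeal

section QuotientCoaction

variable {k G : Type*} [Semiring k] [Group G] (N : Subgroup G) [N.Normal]

noncomputable def quotientCoaction : k[G] →+* k[G][G ⧸ N] :=
  curryRingEquiv.toRingHom.comp (mapDomainRingHom k ((QuotientGroup.mk' N).prod (MonoidHom.id G)))

@[simp]
theorem quotientCoaction_single (g : G) (c : k) :
    quotientCoaction N (single g c) = single (g : G ⧸ N) (single g c) := by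
  simp [quotientCoaction]

@[simp]
theorem augmentation_quotientCoaction (x : k[G]) :
    augmentation k[G] (G ⧸ N) (quotientCoaction N x) = x := by
  induction x using MonoidAlgebra.induction_linear with
  | zero => simp
  | add x y hx hy => simp [hx, hy]
  | single g c => simp

theorem coeff_one_quotientCoaction_mem_rangeS (x : k[G]) :
    (quotientCoaction N x).coeff 1 ∈ (mapDomainRingHom k N.subtype).rangeS := by
  induction x using MonoidAlgebra.induction_linear with
  | zero => simp
  | add x y hx hy => simpa using add_mem hx hy
  | single g c =>
    classical
    by_cases hg : g ∈ N
    · exact ⟨single ⟨g, hg⟩ c, by simp [(QuotientGroup.eq_one_iff g).mpr hg]⟩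
    · simp [(QuotientGroup.eq_one_iff g).not.mpr hg]

end QuotientCoaction

section PExtension

variable {k G : Type*} [Ring k] {p : ℕ} [Fact p.Prime] [CharP k p] [Group G] {N : Subgroup G}
  [N.Normal] [Finite (G ⧸ N)]

theorem coeff_one_quotientCoaction_mul_self (hpq : IsPGroup p (G ⧸ N)) {f : k[G]}
    (hfi : IsIdempotentElem f) (hfc : f ∈ Set.center k[G]) :
    (quotientCoaction N f).coeff 1 * f = f := by
  set d := quotientCoaction N f
  set u : k[G][G ⧸ N] := single 1 f
  have hu : ∀ y, Commute u y :=
    single_commute Commute.one_left fun r => (Semigroup.mem_center_iff.mp hfc r).symm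
  have hidem : IsIdempotentElem ((1 - d) * u) :=
    (hfi.map (quotientCoaction N)).one_sub.mul_of_commute (hu _).symm
      (by simp [u, IsIdempotentElem, hfi.eq])
  have hker : augmentation k[G] (G ⧸ N) ((1 - d) * u) = 0 := by
    simp [d, u, hfi.one_sub_mul_self]
  have hdu : d * u = u := by
    have := hidem.eq_zero_of_isNilpotent (isNilpotent_of_augmentation_eq_zero hpq hker)
    rwa [sub_mul, one_mul, sub_eq_zero, eq_comm] at this
  simpa [u] using congrArg (fun y => y.coeff 1) hdu

theorem coeff_one_quotientCoaction_eq_self (hpq : IsPGroup p (G ⧸ N)) {f : k[G]}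
    (hfi : IsIdempotentElem f) (hfc : f ∈ Set.center k[G]) :
    (quotientCoaction N f).coeff 1 = f := by
  have hf := coeff_one_quotientCoaction_mul_self hpq hfi hfc
  have hf' := coeff_one_quotientCoaction_mul_self hpq hfi.one_sub
    ((Subring.center k[G]).sub_mem (Subring.center k[G]).one_mem hfc)
  rwa [map_sub, (quotientCoaction N).map_one, coeff_sub, Finsupp.sub_apply, coeff_one_one,
    sub_mul, one_mul, mul_sub, mul_one, hf, sub_eq_self, sub_eq_zero] at hf'

theorem mem_range_of_isIdempotentElem_of_mem_center (hpq : IsPGroup p (G ⧸ N)) {f : k[G]}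
    (hfi : IsIdempotentElem f) (hfc : f ∈ Set.center k[G]) :
    f ∈ Set.range (mapDomainRingHom k N.subtype) :=
  coeff_one_quotientCoaction_eq_self hpq hfi hfc ▸ coeff_one_quotientCoaction_mem_rangeS N f

end PExtension

end MonoidAlgebra

/-- Let `N ⊴ G` with `G/N` a `p`-group, `k` a field of characteristic `p`,
and `e` a `G`-stable block idempotent of `kN`.  Then the image of `e` in `kG` is central, and
there is a unique block idempotent `f` of `kG` with `f · e ≠ 0`; i.e. a unique block of `kG`
covers the `G`-stable block of `kN` corresponding to `e`. -/
theorem unique_covering_block_of_p_extension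
    (k : Type) [Field k] (p : ℕ) [Fact p.Prime] [CharP k p]
    (G : Type) [Group G] [Finite G] (N : Subgroup G) [N.Normal]
    (hpq : IsPGroup p (G ⧸ N))
    (e : MonoidAlgebra k ↥N) (he : IsBlockIdempotent e)
    (hstable : ∀ g : G,
      MonoidAlgebra.single g (1 : k) * (MonoidAlgebra.mapDomainRingHom k N.subtype e) *
          MonoidAlgebra.single g⁻¹ (1 : k) =
        MonoidAlgebra.mapDomainRingHom k N.subtype e) :
    (MonoidAlgebra.mapDomainRingHom k N.subtype e) ∈ Set.center (MonoidAlgebra k G) ∧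
    ∃! f : MonoidAlgebra k G, IsBlockIdempotent f ∧
      f * (MonoidAlgebra.mapDomainRingHom k N.subtype e) ≠ 0 := by
  have hcenter := mem_center_of_forall_single_mul_mul_single_inv hstable
  have hblock : IsBlockIdempotent (mapDomainRingHom k N.subtype e) :=
    he.map (mapDomain_injective N.subtype_injective)
      (fun _ hfi hfc => mem_range_of_isIdempotentElem_of_mem_center hpq hfi hfc) hcenter
  refine ⟨hcenter, _, ⟨hblock, ?_⟩, fun f hf => hf.1.eq_of_mul_ne_zero hblock hf.2⟩
  rw [hblock.2.1.eq]
  exact hblock.1
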